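/- Under the ROBE-Z setup, for all x, y ∈ ℝⁿ the variance of the estimator Ŝ(x,y) equals (1/m)·( Σ_{(i,j): Z_id(i) ≠ Z_id(j)} x_i² y_j² + Σ_{(i,j): Z_id(i) ≠ Z_id(j)} x_i y_i x_j y_j ), where both sums range over ordered pairs of indices i, j ∈ {0,…,n−1} lying in different blocks. -/
import Mathlib


open Finset

noncomputable section

/-- Sign value of a Boolean: `true ↦ +1`, `false ↦ -1`. -/
def sgn (b : Bool) : ℝ := if b then 1 else -1

/-- The block id of an index `i` is a valid index into `Fin (n / Z)`. -/
theorem blockLt {n Z : ℕ} (hdvd : Z ∣ n) (i : Fin n) : i.1 / Z < n / Z :=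
  Nat.div_lt_div_of_lt_of_dvd hdvd i.isLt

/-- ROBE-Z location map: `idx i = (h (⌊i/Z⌋) + (i mod Z)) mod m`. -/
def idx (n m Z : ℕ) (hdvd : Z ∣ n) (h : Fin (n / Z) → Fin m) (i : Fin n) : ℕ :=
  ((h ⟨i.1 / Z, blockLt hdvd i⟩).1 + i.1 % Z) % m

/-- The ROBE-Z inner-product estimator `Ŝ(x,y)`, as a function of the random
sample `ω = (h, g)` drawn from the (finite) product space. -/
def est (n m Z : ℕ) (hdvd : Z ∣ n) (x y : Fin n → ℝ)
    (ω : (Fin (n / Z) → Fin m) × (Fin n → Bool)) : ℝ :=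
  ∑ j : Fin m,
    (∑ i : Fin n, x i * sgn (ω.2 i) * (if idx n m Z hdvd ω.1 i = j.1 then 1 else 0)) *
    (∑ i : Fin n, y i * sgn (ω.2 i) * (if idx n m Z hdvd ω.1 i = j.1 then 1 else 0))

/-- Expectation with respect to the uniform (product) measure on the finite
sample space of pairs `(h, g)`. -/
def expec (n m Z : ℕ) (f : ((Fin (n / Z) → Fin m) × (Fin n → Bool)) → ℝ) : ℝ :=
  (∑ ω : (Fin (n / Z) → Fin m) × (Fin n → Bool), f ω) /
    (Fintype.card ((Fin (n / Z) → Fin m) × (Fin n → Bool)))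

/-- Variance of the ROBE-Z inner-product estimator: `E[Ŝ²] - (E[Ŝ])²`. -/
def varZ (n m Z : ℕ) (hdvd : Z ∣ n) (x y : Fin n → ℝ) : ℝ :=
  expec n m Z (fun ω => (est n m Z hdvd x y ω) ^ 2) -
    (expec n m Z (est n m Z hdvd x y)) ^ 2

section helpers
variable {ι β : Type*} [Fintype ι] [DecidableEq ι] [Fintype β]

lemma sum_fn_two (t1 t2 : ι) (h12 : t1 ≠ t2) (f1 f2 : β → ℝ) :
    ∑ g : ι → β, f1 (g t1) * f2 (g t2)
      = (Fintype.card β : ℝ) ^ (Fintype.card ι - 2) * (∑ b, f1 b) * (∑ b, f2 b) := by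
  classical
  have key : ∀ g : ι → β, f1 (g t1) * f2 (g t2)
      = ∏ t, (if t = t1 then f1 (g t) else if t = t2 then f2 (g t) else 1) := by
    intro g
    rw [← Finset.mul_prod_erase univ _ (mem_univ t1)]
    simp only [if_pos rfl]
    congr 1
    rw [Finset.prod_congr rfl (fun t ht => ?_), Finset.prod_ite_eq' (univ.erase t1) t2
      (fun t => f2 (g t))]
    · simp [Finset.mem_erase, h12.symm]
    · rw [if_neg (Finset.ne_of_mem_erase ht)]
  simp only [key]
  rw [← Fintype.prod_sum (fun t b => if t = t1 then f1 b else if t = t2 then f2 b else 1)]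
  rw [← Finset.mul_prod_erase univ _ (mem_univ t1)]
  simp only [if_pos rfl]
  have h2 : ∀ t ∈ univ.erase t1, (∑ b, if t = t1 then f1 b else if t = t2 then f2 b else 1)
      = if t = t2 then (∑ b, f2 b) else (Fintype.card β : ℝ) := by
    intro t ht
    simp only [if_neg (Finset.ne_of_mem_erase ht)]
    split_ifs <;> simp
  rw [Finset.prod_congr rfl h2]
  have ht2 : t2 ∈ univ.erase t1 := by simp [Ne.symm h12]
  rw [← Finset.mul_prod_erase _ _ ht2, if_pos rfl]
  rw [Finset.prod_congr rfl (fun t ht => if_neg (Finset.ne_of_mem_erase ht)), Finset.prod_const]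
  have hcard : ((univ.erase t1).erase t2).card = Fintype.card ι - 2 := by
    rw [Finset.card_erase_of_mem ht2, Finset.card_erase_of_mem (mem_univ t1), Finset.card_univ]; omega
  rw [hcard]
  simp only [if_true]
  ring

end helpers

lemma sgn_sq (b : Bool) : sgn b * sgn b = 1 := by cases b <;> simp [sgn]

lemma sum_sgn_bool : ∑ b : Bool, sgn b = 0 := by simp [sgn]

lemma sum_sgn_two {n : ℕ} (i k : Fin n) :
    ∑ g : Fin n → Bool, sgn (g i) * sgn (g k) = if i = k then (2:ℝ)^n else 0 := by
  by_cases h : i = k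
  · subst h
    simp only [sgn_sq, if_pos rfl, Finset.sum_const, Finset.card_univ]
    simp [Fintype.card_fun]
  · rw [if_neg h, sum_fn_two i k h sgn sgn, sum_sgn_bool]
    ring

lemma prod_sgn_single {n : ℕ} (g : Fin n → Bool) (j : Fin n) :
    ∏ t, sgn (g t) ^ (if t = j then 1 else 0) = sgn (g j) := by
  rw [Finset.prod_congr rfl (fun t _ => show sgn (g t) ^ (if t = j then 1 else 0)
      = if t = j then sgn (g t) else 1 by split_ifs <;> simp)]
  rw [Finset.prod_ite_eq' univ j (fun t => sgn (g t))]
  simp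

lemma sgn4_as_prod {n : ℕ} (g : Fin n → Bool) (i k i' k' : Fin n) :
    sgn (g i) * sgn (g k) * sgn (g i') * sgn (g k') =
    ∏ t, sgn (g t) ^ ((if t = i then 1 else 0) + (if t = k then 1 else 0)
      + (if t = i' then 1 else 0) + (if t = k' then 1 else 0)) := by
  simp only [pow_add, Finset.prod_mul_distrib]
  rw [prod_sgn_single g i, prod_sgn_single g k, prod_sgn_single g i', prod_sgn_single g k']

lemma sum_sgn_pow {n : ℕ} (c : Fin n → ℕ) :
    ∑ g : Fin n → Bool, ∏ t, sgn (g t) ^ c t = ∏ t, (1 + (-1:ℝ) ^ c t) := by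
  rw [← Fintype.prod_sum (fun t (b : Bool) => sgn b ^ c t)]
  exact Finset.prod_congr rfl fun t _ => by simp [Fintype.sum_bool, sgn]

lemma prod_pm_even {n : ℕ} (c : Fin n → ℕ) (h : ∀ t, Even (c t)) :
    ∏ t, (1 + (-1:ℝ) ^ c t) = 2 ^ n := by
  rw [Finset.prod_congr rfl (fun t _ => by rw [(h t).neg_one_pow])]
  norm_num

lemma prod_pm_odd {n : ℕ} (c : Fin n → ℕ) (t0 : Fin n) (h : Odd (c t0)) :
    ∏ t, (1 + (-1:ℝ) ^ c t) = 0 :=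
  Finset.prod_eq_zero (Finset.mem_univ t0) (by rw [h.neg_one_pow]; ring)

lemma sum_sgn4 {n : ℕ} (i k i' k' : Fin n) :
    ∑ g : Fin n → Bool, sgn (g i) * sgn (g k) * sgn (g i') * sgn (g k')
    = 2^n * ((if i = k ∧ i' = k' then 1 else 0) + (if i ≠ k ∧ i = i' ∧ k = k' then 1 else 0)
        + (if i ≠ k ∧ i = k' ∧ k = i' then 1 else 0)) := by
  simp only [sgn4_as_prod _ i k i' k']
  rw [sum_sgn_pow]
  by_cases h1 : i = k
  · subst h1
    by_cases h2 : i' = k'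
    · subst h2
      rw [prod_pm_even _ (fun t => by split_ifs <;> decide)]
      simp
    · rw [prod_pm_odd _ i' (by simp only [if_neg h2, if_pos rfl]; split_ifs <;> decide)]
      simp [h2]
  · by_cases h2 : i = i'
    · subst h2
      by_cases h3 : k = k'
      · subst h3
        rw [prod_pm_even _ (fun t => by split_ifs <;> decide)]
        simp [h1]
      · rw [prod_pm_odd _ k (by
          simp only [if_neg (show ¬k = i from fun h => h1 h.symm), if_pos rfl, if_neg h3]
          decide)]
        simp [h1, h3, show ¬k = i from fun h => h1 h.symm]
    · by_cases h3 : i = k'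
      · subst h3
        by_cases h4 : k = i'
        · subst h4
          rw [prod_pm_even _ (fun t => by split_ifs <;> decide)]
          simp [h1, h2]
        · rw [prod_pm_odd _ k (by
            simp only [if_neg (show ¬k = i from fun h => h1 h.symm), if_pos rfl, if_neg h4]
            decide)]
          simp [h1, h2, h4]
      · rw [prod_pm_odd _ i (by
          simp only [if_pos rfl, if_neg h1, if_neg h2, if_neg h3]
          decide)]
        simp [h1, h2, h3]

lemma ite_eq_expand {m : ℕ} (p q : ℕ) (hp : p < m) :
    ∑ j : Fin m, (if p = j.1 then (1:ℝ) else 0) * (if q = j.1 then (1:ℝ) else 0)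
      = if p = q then (1:ℝ) else 0 := by
  have : ∀ j : Fin m, (if p = j.1 then (1:ℝ) else 0) * (if q = j.1 then (1:ℝ) else 0)
      = if j = ⟨p, hp⟩ then (if q = j.1 then (1:ℝ) else 0) else 0 := by
    intro j
    by_cases hj : j = ⟨p, hp⟩
    · subst hj; simp
    · rw [if_neg hj, if_neg (fun h => hj (Fin.ext h.symm)), zero_mul]
  rw [Finset.sum_congr rfl (fun j _ => this j)]
  simp only [Finset.sum_ite_eq', Finset.mem_univ, if_true]
  simp [eq_comm]

lemma sum_indicator_shift {m : ℕ} (hm : 0 < m) (r : ℕ) (j : Fin m) :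
    ∑ a : Fin m, (if (a.1 + r) % m = j.1 then (1:ℝ) else 0) = 1 := by
  have hinj : Function.Injective (fun a : Fin m => (⟨(a.1 + r) % m, Nat.mod_lt _ hm⟩ : Fin m)) := by
    intro a a' h
    have h2 : (a.1 + r) % m = (a'.1 + r) % m := congrArg Fin.val h
    have h3 : a.1 % m = a'.1 % m := Nat.ModEq.add_right_cancel' r h2
    exact Fin.ext (by rwa [Nat.mod_eq_of_lt a.isLt, Nat.mod_eq_of_lt a'.isLt] at h3)
  have hbij := (Finite.injective_iff_bijective).1 hinj
  have := Function.Bijective.sum_comp hbij (fun a => if a = j then (1:ℝ) else 0)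
  simp only [Fin.ext_iff] at this
  rw [show (fun a : Fin m => if (a.1 + r) % m = j.1 then (1:ℝ) else 0)
    = fun a => if (⟨(a.1 + r) % m, Nat.mod_lt _ hm⟩ : Fin m) = j then (1:ℝ) else 0 from
      funext fun a => by simp [Fin.ext_iff]]
  rw [Function.Bijective.sum_comp hbij (fun a => if a = j then (1:ℝ) else 0)]
  simp

section robe
variable (n m Z : ℕ)

/-- The pair indicator `1[idx i = idx k]` as a function of `h`. -/
def Ind (hdvd : Z ∣ n) (i k : Fin n) (h : Fin (n / Z) → Fin m) : ℝ :=
  if idx n m Z hdvd h i = idx n m Z hdvd h k then 1 else 0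

variable {n m Z}

lemma Ind_self (hdvd : Z ∣ n) (i : Fin n) (h : Fin (n / Z) → Fin m) :
    Ind n m Z hdvd i i h = 1 := if_pos rfl

lemma Ind_symm (hdvd : Z ∣ n) (i k : Fin n) (h : Fin (n / Z) → Fin m) :
    Ind n m Z hdvd k i h = Ind n m Z hdvd i k h := by
  unfold Ind; simp [eq_comm]

lemma Ind_mul_self (hdvd : Z ∣ n) (i k : Fin n) (h : Fin (n / Z) → Fin m) :
    Ind n m Z hdvd i k h * Ind n m Z hdvd i k h = Ind n m Z hdvd i k h := by
  unfold Ind; split_ifs <;> norm_num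

lemma mod_ne_of_same_block (hZ : 0 < Z) {i k : Fin n} (hik : i ≠ k)
    (hb : i.1 / Z = k.1 / Z) : i.1 % Z ≠ k.1 % Z := by
  intro h
  apply hik
  apply Fin.ext
  have h1 := Nat.div_add_mod i.1 Z
  have h2 := Nat.div_add_mod k.1 Z
  rw [hb, h] at h1
  omega

lemma sum_Ind (hm : 0 < m) (hZ : 0 < Z) (hZm : Z ≤ m) (hdvd : Z ∣ n)
    (i k : Fin n) (hik : i ≠ k) :
    ∑ h : Fin (n / Z) → Fin m, Ind n m Z hdvd i k h
      = if i.1 / Z = k.1 / Z then 0 else (m : ℝ) ^ (n / Z - 1) := by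
  by_cases hb : i.1 / Z = k.1 / Z
  · rw [if_pos hb]
    apply Finset.sum_eq_zero
    intro h _
    unfold Ind idx
    rw [if_neg]
    intro heq
    have hbf : (⟨i.1 / Z, blockLt hdvd i⟩ : Fin (n / Z)) = ⟨k.1 / Z, blockLt hdvd k⟩ :=
      Fin.ext hb
    rw [hbf] at heq
    have h3 : i.1 % Z % m = k.1 % Z % m := Nat.ModEq.add_left_cancel' _ heq
    rw [Nat.mod_eq_of_lt (lt_of_lt_of_le (Nat.mod_lt _ hZ) hZm),
      Nat.mod_eq_of_lt (lt_of_lt_of_le (Nat.mod_lt _ hZ) hZm)] at h3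
    exact mod_ne_of_same_block hZ hik hb h3
  · rw [if_neg hb]
    set b1 : Fin (n / Z) := ⟨i.1 / Z, blockLt hdvd i⟩ with hb1
    set b2 : Fin (n / Z) := ⟨k.1 / Z, blockLt hdvd k⟩ with hb2
    have hbne : b1 ≠ b2 := fun h => hb (congrArg Fin.val h)
    have hexp : ∀ h : Fin (n / Z) → Fin m, Ind n m Z hdvd i k h
        = ∑ j : Fin m, (if ((h b1).1 + i.1 % Z) % m = j.1 then (1:ℝ) else 0)
          * (if ((h b2).1 + k.1 % Z) % m = j.1 then (1:ℝ) else 0) := by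
      intro h
      unfold Ind idx
      exact (ite_eq_expand _ _ (Nat.mod_lt _ hm)).symm
    rw [Finset.sum_congr rfl (fun h _ => hexp h), Finset.sum_comm]
    have hterm : ∀ j : Fin m,
        ∑ h : Fin (n / Z) → Fin m, (if ((h b1).1 + i.1 % Z) % m = j.1 then (1:ℝ) else 0)
          * (if ((h b2).1 + k.1 % Z) % m = j.1 then (1:ℝ) else 0)
        = (m : ℝ) ^ (n / Z - 2) := by
      intro j
      rw [sum_fn_two b1 b2 hbne (fun a : Fin m => if (a.1 + i.1 % Z) % m = j.1 then (1:ℝ) else 0)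
        (fun a : Fin m => if (a.1 + k.1 % Z) % m = j.1 then (1:ℝ) else 0)]
      rw [sum_indicator_shift hm, sum_indicator_shift hm]
      simp
    rw [Finset.sum_congr rfl (fun j _ => hterm j), Finset.sum_const, Finset.card_univ,
      Fintype.card_fin, nsmul_eq_mul]
    have hge2 : 2 ≤ n / Z := by
      have := b1.isLt; have := b2.isLt
      have : b1.1 ≠ b2.1 := fun h => hbne (Fin.ext h)
      omega
    rw [show n / Z - 1 = (n / Z - 2) + 1 by omega, pow_succ]
    ring

end robe

section main
variable {n m Z : ℕ}

lemma est_eq (hm : 0 < m) (hdvd : Z ∣ n) (x y : Fin n → ℝ)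
    (ω : (Fin (n / Z) → Fin m) × (Fin n → Bool)) :
    est n m Z hdvd x y ω
      = ∑ i, ∑ k, x i * y k * (sgn (ω.2 i) * sgn (ω.2 k)) * Ind n m Z hdvd i k ω.1 := by
  unfold est
  rw [Finset.sum_congr rfl (fun j _ => Finset.sum_mul_sum univ univ
    (fun i => x i * sgn (ω.2 i) * (if idx n m Z hdvd ω.1 i = j.1 then (1:ℝ) else 0))
    (fun i => y i * sgn (ω.2 i) * (if idx n m Z hdvd ω.1 i = j.1 then (1:ℝ) else 0)))]
  rw [Finset.sum_comm]
  refine Finset.sum_congr rfl fun i _ => ?_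
  rw [Finset.sum_comm]
  refine Finset.sum_congr rfl fun k _ => ?_
  have : ∀ j : Fin m, (x i * sgn (ω.2 i) * (if idx n m Z hdvd ω.1 i = j.1 then (1:ℝ) else 0)) *
      (y k * sgn (ω.2 k) * (if idx n m Z hdvd ω.1 k = j.1 then (1:ℝ) else 0))
      = (x i * y k * (sgn (ω.2 i) * sgn (ω.2 k))) *
        ((if idx n m Z hdvd ω.1 i = j.1 then (1:ℝ) else 0) *
         (if idx n m Z hdvd ω.1 k = j.1 then (1:ℝ) else 0)) := fun j => by ring
  have hlt : idx n m Z hdvd ω.1 i < m := Nat.mod_lt _ hm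
  rw [Finset.sum_congr rfl (fun j _ => this j), ← Finset.mul_sum,
    ite_eq_expand (idx n m Z hdvd ω.1 i) (idx n m Z hdvd ω.1 k) hlt]
  unfold Ind
  ring

lemma expec_eq (f : ((Fin (n / Z) → Fin m) × (Fin n → Bool)) → ℝ) :
    expec n m Z f = (∑ h : Fin (n / Z) → Fin m, ∑ g : Fin n → Bool, f (h, g))
      / ((m : ℝ) ^ (n / Z) * 2 ^ n) := by
  unfold expec
  rw [Fintype.sum_prod_type]
  congr 1
  simp [Fintype.card_fun]

lemma sum_est (hm : 0 < m) (hdvd : Z ∣ n) (x y : Fin n → ℝ) :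
    ∑ h : Fin (n / Z) → Fin m, ∑ g : Fin n → Bool, est n m Z hdvd x y (h, g)
      = (m : ℝ) ^ (n / Z) * 2 ^ n * ∑ i, x i * y i := by
  have key : ∀ h : Fin (n / Z) → Fin m,
      ∑ g : Fin n → Bool, est n m Z hdvd x y (h, g) = 2 ^ n * ∑ i, x i * y i := by
    intro h
    rw [Finset.sum_congr rfl (fun g _ => est_eq hm hdvd x y (h, g))]
    rw [Finset.sum_comm]
    have inner : ∀ i : Fin n, ∑ g : Fin n → Bool, ∑ k,
        x i * y k * (sgn (g i) * sgn (g k)) * Ind n m Z hdvd i k h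
        = 2 ^ n * (x i * y i) := by
      intro i
      rw [Finset.sum_comm]
      have inner2 : ∀ k : Fin n, ∑ g : Fin n → Bool,
          x i * y k * (sgn (g i) * sgn (g k)) * Ind n m Z hdvd i k h
          = (x i * y k * Ind n m Z hdvd i k h) * (if i = k then (2:ℝ)^n else 0) := by
        intro k
        rw [Finset.sum_congr rfl (fun g _ => show
          x i * y k * (sgn (g i) * sgn (g k)) * Ind n m Z hdvd i k h
          = (x i * y k * Ind n m Z hdvd i k h) * (sgn (g i) * sgn (g k)) by ring),
          ← Finset.mul_sum, sum_sgn_two]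
      rw [Finset.sum_congr rfl (fun k _ => inner2 k)]
      rw [Finset.sum_congr rfl (fun k _ => show
        (x i * y k * Ind n m Z hdvd i k h) * (if i = k then (2:ℝ)^n else 0)
        = if i = k then (x i * y k * Ind n m Z hdvd i k h) * 2^n else 0 by
          split_ifs <;> ring)]
      rw [Finset.sum_ite_eq univ i (fun k => (x i * y k * Ind n m Z hdvd i k h) * 2^n)]
      rw [if_pos (Finset.mem_univ i), Ind_self]
      ring
    rw [Finset.sum_congr rfl (fun i _ => inner i), ← Finset.mul_sum]
  rw [Finset.sum_congr rfl (fun h _ => key h), Finset.sum_const, Finset.card_univ,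
    Fintype.card_fun, Fintype.card_fin, Fintype.card_fin, nsmul_eq_mul]
  push_cast
  ring

end main

section main2
variable {n m Z : ℕ}

/-- the pairing coefficient -/
def Epair {n : ℕ} (i k i' k' : Fin n) : ℝ :=
  (if i = k ∧ i' = k' then (1:ℝ) else 0) + (if i ≠ k ∧ i = i' ∧ k = k' then 1 else 0)
    + (if i ≠ k ∧ i = k' ∧ k = i' then 1 else 0)

lemma sum_g_est_sq (hm : 0 < m) (hdvd : Z ∣ n) (x y : Fin n → ℝ)
    (h : Fin (n / Z) → Fin m) :
    ∑ g : Fin n → Bool, (est n m Z hdvd x y (h, g))^2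
      = ∑ i, ∑ i', ∑ k, ∑ k',
          (x i * y k * x i' * y k' * (Ind n m Z hdvd i k h * Ind n m Z hdvd i' k' h))
            * (2^n * Epair i k i' k') := by
  have e1 : ∀ g : Fin n → Bool, (est n m Z hdvd x y (h, g))^2
      = ∑ i, ∑ i', ∑ k, ∑ k',
          (x i * y k * x i' * y k' * (Ind n m Z hdvd i k h * Ind n m Z hdvd i' k' h))
            * (sgn (g i) * sgn (g k) * sgn (g i') * sgn (g k')) := by
    intro g
    rw [est_eq hm hdvd x y (h, g), sq, Finset.sum_mul_sum]
    refine Finset.sum_congr rfl fun i _ => ?_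
    refine Finset.sum_congr rfl fun i' _ => ?_
    rw [Finset.sum_mul_sum]
    refine Finset.sum_congr rfl fun k _ => Finset.sum_congr rfl fun k' _ => ?_
    dsimp only
    ring
  rw [Finset.sum_congr rfl fun g _ => e1 g]
  rw [Finset.sum_comm]
  refine Finset.sum_congr rfl fun i _ => ?_
  rw [Finset.sum_comm]
  refine Finset.sum_congr rfl fun i' _ => ?_
  rw [Finset.sum_comm]
  refine Finset.sum_congr rfl fun k _ => ?_
  rw [Finset.sum_comm]
  refine Finset.sum_congr rfl fun k' _ => ?_
  rw [← Finset.mul_sum, sum_sgn4 i k i' k']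
  rfl
end main2

section main3
variable {n m Z : ℕ}

lemma collapseT1 (F : Fin n → Fin n → Fin n → Fin n → ℝ) :
    (∑ i, ∑ i', ∑ k, ∑ k', (if i = k ∧ i' = k' then (1:ℝ) else 0) * F i k i' k')
      = ∑ i, ∑ i', F i i i' i' := by
  refine Finset.sum_congr rfl fun i _ => Finset.sum_congr rfl fun i' _ => ?_
  have h1 : ∀ k : Fin n, ∑ k', (if i = k ∧ i' = k' then (1:ℝ) else 0) * F i k i' k'
      = if i = k then F i k i' i' else 0 := by
    intro k
    rw [Finset.sum_congr rfl (fun k' _ => show (if i = k ∧ i' = k' then (1:ℝ) else 0) * F i k i' k'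
      = if i' = k' then (if i = k then F i k i' k' else 0) else 0 by split_ifs <;> first | (simp_all; done) | aesop)]
    rw [Finset.sum_ite_eq univ i', if_pos (Finset.mem_univ i')]
  rw [Finset.sum_congr rfl (fun k _ => h1 k), Finset.sum_ite_eq univ i,
    if_pos (Finset.mem_univ i)]

lemma collapseT2 (F : Fin n → Fin n → Fin n → Fin n → ℝ) :
    (∑ i, ∑ i', ∑ k, ∑ k', (if i ≠ k ∧ i = i' ∧ k = k' then (1:ℝ) else 0) * F i k i' k')
      = ∑ i, ∑ k, if i = k then 0 else F i k i k := by
  refine Finset.sum_congr rfl fun i _ => ?_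
  have h2 : ∀ i' k : Fin n, ∑ k', (if i ≠ k ∧ i = i' ∧ k = k' then (1:ℝ) else 0) * F i k i' k'
      = (if i ≠ k ∧ i = i' then (1:ℝ) else 0) * F i k i' k := by
    intro i' k
    rw [Finset.sum_congr rfl (fun k' _ => show (if i ≠ k ∧ i = i' ∧ k = k' then (1:ℝ) else 0) * F i k i' k'
      = if k = k' then (if i ≠ k ∧ i = i' then (1:ℝ) else 0) * F i k i' k' else 0 by
        split_ifs <;> first | (simp_all; done) | aesop)]
    rw [Finset.sum_ite_eq univ k, if_pos (Finset.mem_univ k)]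
  rw [Finset.sum_congr rfl (fun i' _ => Finset.sum_congr rfl (fun k _ => h2 i' k)),
    Finset.sum_comm]
  refine Finset.sum_congr rfl fun k _ => ?_
  rw [Finset.sum_congr rfl (fun i' _ => show (if i ≠ k ∧ i = i' then (1:ℝ) else 0) * F i k i' k
      = if i = i' then (if i = k then 0 else F i k i' k) else 0 by split_ifs <;> first | (simp_all; done) | aesop)]
  rw [Finset.sum_ite_eq univ i, if_pos (Finset.mem_univ i)]

lemma collapseT3 (F : Fin n → Fin n → Fin n → Fin n → ℝ) :
    (∑ i, ∑ i', ∑ k, ∑ k', (if i ≠ k ∧ i = k' ∧ k = i' then (1:ℝ) else 0) * F i k i' k')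
      = ∑ i, ∑ k, if i = k then 0 else F i k k i := by
  refine Finset.sum_congr rfl fun i _ => ?_
  have h2 : ∀ i' k : Fin n, ∑ k', (if i ≠ k ∧ i = k' ∧ k = i' then (1:ℝ) else 0) * F i k i' k'
      = (if i ≠ k ∧ k = i' then (1:ℝ) else 0) * F i k i' i := by
    intro i' k
    rw [Finset.sum_congr rfl (fun k' _ => show (if i ≠ k ∧ i = k' ∧ k = i' then (1:ℝ) else 0) * F i k i' k'
      = if i = k' then (if i ≠ k ∧ k = i' then (1:ℝ) else 0) * F i k i' k' else 0 by
        split_ifs <;> first | (simp_all; done) | aesop)]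
    rw [Finset.sum_ite_eq univ i, if_pos (Finset.mem_univ i)]
  rw [Finset.sum_congr rfl (fun i' _ => Finset.sum_congr rfl (fun k _ => h2 i' k)),
    Finset.sum_comm]
  refine Finset.sum_congr rfl fun k _ => ?_
  rw [Finset.sum_congr rfl (fun i' _ => show (if i ≠ k ∧ k = i' then (1:ℝ) else 0) * F i k i' i
      = if k = i' then (if i = k then 0 else F i k i' i) else 0 by
        split_ifs <;> first | (simp_all; done) | aesop)]
  rw [Finset.sum_ite_eq univ k, if_pos (Finset.mem_univ k)]

end main3

section main4
variable {n m Z : ℕ}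

lemma sum_comm5 {α β : Type*} [Fintype α] [Fintype β] (f : α → α → α → α → β → ℝ) :
    ∑ h : β, ∑ i : α, ∑ i' : α, ∑ k : α, ∑ k' : α, f i i' k k' h
      = ∑ i : α, ∑ i' : α, ∑ k : α, ∑ k' : α, ∑ h : β, f i i' k k' h := by
  rw [Finset.sum_comm]
  refine Finset.sum_congr rfl fun i _ => ?_
  rw [Finset.sum_comm]
  refine Finset.sum_congr rfl fun i' _ => ?_
  rw [Finset.sum_comm]
  refine Finset.sum_congr rfl fun k _ => ?_
  exact Finset.sum_comm

lemma sum_est_sq (hm : 0 < m) (hZ : 0 < Z) (hZm : Z ≤ m) (hdvd : Z ∣ n) (x y : Fin n → ℝ) :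
    ∑ h : Fin (n / Z) → Fin m, ∑ g : Fin n → Bool, (est n m Z hdvd x y (h, g))^2
      = 2^n * ((m:ℝ)^(n/Z) * (∑ i, x i * y i)^2
        + (m:ℝ)^(n/Z - 1) *
          ((∑ i, ∑ k, if i.1/Z ≠ k.1/Z then x i^2 * y k^2 else 0)
           + (∑ i, ∑ k, if i.1/Z ≠ k.1/Z then x i * y i * x k * y k else 0))) := by
  rw [Finset.sum_congr rfl fun h _ => sum_g_est_sq hm hdvd x y h]
  rw [sum_comm5 (fun i i' k k' h =>
    (x i * y k * x i' * y k' * (Ind n m Z hdvd i k h * Ind n m Z hdvd i' k' h))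
      * (2^n * Epair i k i' k'))]
  have step : ∀ i i' k k' : Fin n,
      ∑ h : Fin (n / Z) → Fin m,
        (x i * y k * x i' * y k' * (Ind n m Z hdvd i k h * Ind n m Z hdvd i' k' h))
          * (2^n * Epair i k i' k')
      = 2^n * ((if i = k ∧ i' = k' then (1:ℝ) else 0)
            * (x i * y k * x i' * y k' * ∑ h, Ind n m Z hdvd i k h * Ind n m Z hdvd i' k' h)
          + (if i ≠ k ∧ i = i' ∧ k = k' then (1:ℝ) else 0)
            * (x i * y k * x i' * y k' * ∑ h, Ind n m Z hdvd i k h * Ind n m Z hdvd i' k' h)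
          + (if i ≠ k ∧ i = k' ∧ k = i' then (1:ℝ) else 0)
            * (x i * y k * x i' * y k' * ∑ h, Ind n m Z hdvd i k h * Ind n m Z hdvd i' k' h)) := by
    intro i i' k k'
    rw [Finset.sum_congr rfl fun h _ => show
      (x i * y k * x i' * y k' * (Ind n m Z hdvd i k h * Ind n m Z hdvd i' k' h))
        * (2^n * Epair i k i' k')
      = (x i * y k * x i' * y k' * (2^n * Epair i k i' k'))
          * (Ind n m Z hdvd i k h * Ind n m Z hdvd i' k' h) from by ring,
      ← Finset.mul_sum]
    unfold Epair
    ring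
  rw [Finset.sum_congr rfl fun i _ => Finset.sum_congr rfl fun i' _ =>
    Finset.sum_congr rfl fun k _ => Finset.sum_congr rfl fun k' _ => step i i' k k']
  simp only [mul_add, Finset.sum_add_distrib, ← Finset.mul_sum]
  have hA1 : (∑ i, ∑ i', ∑ k, ∑ k', (if i = k ∧ i' = k' then (1:ℝ) else 0)
      * (x i * y k * x i' * y k' * ∑ h, Ind n m Z hdvd i k h * Ind n m Z hdvd i' k' h))
      = (m:ℝ)^(n/Z) * (∑ i, x i * y i)^2 := by
    rw [collapseT1 (fun i k i' k' => x i * y k * x i' * y k'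
      * ∑ h, Ind n m Z hdvd i k h * Ind n m Z hdvd i' k' h)]
    have hv : ∀ i i' : Fin n, (∑ h : Fin (n/Z) → Fin m,
        Ind n m Z hdvd i i h * Ind n m Z hdvd i' i' h) = (m:ℝ)^(n/Z) := by
      intro i i'
      rw [Finset.sum_congr rfl fun h _ => by rw [Ind_self, Ind_self, mul_one]]
      simp [Finset.card_univ, Fintype.card_fun]
    rw [Finset.sum_congr rfl fun i _ => Finset.sum_congr rfl fun i' _ => by
      rw [hv i i']]
    rw [Finset.sum_congr rfl fun i _ => Finset.sum_congr rfl fun i' _ => show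
      x i * y i * x i' * y i' * (m:ℝ)^(n/Z)
        = (m:ℝ)^(n/Z) * ((x i * y i) * (x i' * y i')) from by ring]
    simp only [← Finset.mul_sum]
    rw [← Finset.sum_mul, ← sq]
  have per2 : ∀ i k : Fin n, (if i = k then (0:ℝ)
      else x i * y k * x i * y k * ∑ h, Ind n m Z hdvd i k h * Ind n m Z hdvd i k h)
      = (m:ℝ)^(n/Z - 1) * (if i.1/Z ≠ k.1/Z then x i^2 * y k^2 else 0) := by
    intro i k
    by_cases hik : i = k
    · subst hik
      simp
    · rw [if_neg hik, Finset.sum_congr rfl fun h _ => Ind_mul_self hdvd i k h,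
        sum_Ind hm hZ hZm hdvd i k hik]
      by_cases hb : i.1/Z = k.1/Z
      · simp [hb]
      · rw [if_neg hb, if_pos hb]
        ring
  have hA2 : (∑ i, ∑ i', ∑ k, ∑ k', (if i ≠ k ∧ i = i' ∧ k = k' then (1:ℝ) else 0)
      * (x i * y k * x i' * y k' * ∑ h, Ind n m Z hdvd i k h * Ind n m Z hdvd i' k' h))
      = (m:ℝ)^(n/Z - 1) * (∑ i, ∑ k, if i.1/Z ≠ k.1/Z then x i^2 * y k^2 else 0) := by
    rw [collapseT2 (fun i k i' k' => x i * y k * x i' * y k'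
      * ∑ h, Ind n m Z hdvd i k h * Ind n m Z hdvd i' k' h)]
    rw [Finset.sum_congr rfl fun i _ => Finset.sum_congr rfl fun k _ => per2 i k]
    simp only [← Finset.mul_sum]
  have per3 : ∀ i k : Fin n, (if i = k then (0:ℝ)
      else x i * y k * x k * y i * ∑ h, Ind n m Z hdvd i k h * Ind n m Z hdvd k i h)
      = (m:ℝ)^(n/Z - 1) * (if i.1/Z ≠ k.1/Z then x i * y i * x k * y k else 0) := by
    intro i k
    by_cases hik : i = k
    · subst hik
      simp
    · rw [if_neg hik, Finset.sum_congr rfl fun h _ => by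
        rw [Ind_symm hdvd i k h, Ind_mul_self hdvd i k h]]
      rw [sum_Ind hm hZ hZm hdvd i k hik]
      by_cases hb : i.1/Z = k.1/Z
      · simp [hb]
      · rw [if_neg hb, if_pos hb]
        ring
  have hA3 : (∑ i, ∑ i', ∑ k, ∑ k', (if i ≠ k ∧ i = k' ∧ k = i' then (1:ℝ) else 0)
      * (x i * y k * x i' * y k' * ∑ h, Ind n m Z hdvd i k h * Ind n m Z hdvd i' k' h))
      = (m:ℝ)^(n/Z - 1) * (∑ i, ∑ k, if i.1/Z ≠ k.1/Z then x i * y i * x k * y k else 0) := by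
    rw [collapseT3 (fun i k i' k' => x i * y k * x i' * y k'
      * ∑ h, Ind n m Z hdvd i k h * Ind n m Z hdvd i' k' h)]
    rw [Finset.sum_congr rfl fun i _ => Finset.sum_congr rfl fun k _ => per3 i k]
    simp only [← Finset.mul_sum]
  rw [hA1, hA2, hA3]
  ring

end main4


/-- The variance of the ROBE-Z estimator equals
`(1/m)·(Σ_{Z_id(i) ≠ Z_id(j)} x_i² y_j² + Σ_{Z_id(i) ≠ Z_id(j)} x_i y_i x_j y_j)`. -/
theorem robe_estimator_variance (n m Z : ℕ) (hn : 0 < n) (hm : 0 < m) (hZ : 0 < Z)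
    (hdvd : Z ∣ n) (hZm : Z ≤ m) (hmn : m ≤ n) (x y : Fin n → ℝ) :
    varZ n m Z hdvd x y =
      (1 / (m : ℝ)) *
        ((∑ i : Fin n, ∑ j : Fin n,
            if i.1 / Z ≠ j.1 / Z then x i ^ 2 * y j ^ 2 else 0) +
         (∑ i : Fin n, ∑ j : Fin n,
            if i.1 / Z ≠ j.1 / Z then x i * y i * x j * y j else 0)) := by
  have hm0 : (m:ℝ) ≠ 0 := Nat.cast_ne_zero.2 hm.ne'
  have h2n : (2:ℝ)^n ≠ 0 := by positivity
  have hmN1 : (m:ℝ)^(n/Z - 1) ≠ 0 := pow_ne_zero _ hm0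
  unfold varZ
  rw [expec_eq, expec_eq, sum_est hm hdvd x y, sum_est_sq hm hZ hZm hdvd x y]
  rw [show (m:ℝ)^(n/Z) = (m:ℝ)^(n/Z - 1) * m by
    rw [← pow_succ]
    congr 1
    have : 1 ≤ n / Z := (Nat.one_le_div_iff hZ).2 (le_trans hZm hmn)
    omega]
  field_simp
  ring
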